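/- Let A be a dual Banach algebra with predual A_*, and suppose M ∈ σWC((A⊗̂A)')' is a σWC-virtual diagonal (a·M = M·a for all a ∈ A and a·Δ̃_A(M) = a for all a). Define P : σWC(B(A,A')) → A' by ⟨P(T), a⟩ = ⟨M, a·T⟩. Then P takes values in A_*, P is an A-bimodule homomorphism, and P ∘ Δ'_A = identity on A_*. -/

import Mathlib

open NormedSpace

set_option synthInstance.maxHeartbeats 1000000
set_option maxHeartbeats 1000000

noncomputable section

/-- The Banach-space adjoint `T' : F' → E'` of `T : E → F`. -/
def adjOp {E F : Type*} [NormedAddCommGroup E] [NormedSpace ℂ E]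
    [NormedAddCommGroup F] [NormedSpace ℂ F] (T : E →L[ℂ] F) :
    StrongDual ℂ F →L[ℂ] StrongDual ℂ E :=
  (ContinuousLinearMap.compL ℂ E F ℂ).flip T

/-- The weak topology `σ(E, p)` determined by a subspace `p ⊆ E'`. -/
def weakTop {E : Type*} [NormedAddCommGroup E] [NormedSpace ℂ E]
    (p : Submodule ℂ (StrongDual ℂ E)) : TopologicalSpace E :=
  ⨅ φ : p, TopologicalSpace.induced (fun x => (φ : StrongDual ℂ E) x) inferInstance

/-- The canonical map `E → p'` for a subspace `p ⊆ E'`. -/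
def predualMap {E : Type*} [NormedAddCommGroup E] [NormedSpace ℂ E]
    (p : Submodule ℂ (StrongDual ℂ E)) :=
  (adjOp (E := p) p.subtypeL).comp (inclusionInDoubleDual ℂ E)

/-- `p` is a predual of `E` when the canonical map `E → p'` is an isomorphism. -/
def IsPredual {E : Type*} [NormedAddCommGroup E] [NormedSpace ℂ E]
    (p : Submodule ℂ (StrongDual ℂ E)) : Prop :=
  Function.Bijective (predualMap p)

/-- The identity map of `E`, viewed as taking values in `E` with its weak topology. -/
def toWeak {E : Type*} [NormedAddCommGroup E] [NormedSpace ℂ E] : E → WeakSpace ℂ E :=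
  fun x => x

/-- Left multiplication `b ↦ a * b` as a continuous linear map. -/
def lmul {A : Type*} [NormedRing A] [NormedAlgebra ℂ A] (a : A) : A →L[ℂ] A :=
  ContinuousLinearMap.mul ℂ A a

/-- Right multiplication `b ↦ b * a` as a continuous linear map. -/
def rmul {A : Type*} [NormedRing A] [NormedAlgebra ℂ A] (a : A) : A →L[ℂ] A :=
  (ContinuousLinearMap.mul ℂ A).flip a

/-- `T ∈ σWC(B(A,A'))`: both orbit maps `a ↦ a·T = T ∘ rmul a` and
`a ↦ T·a = (lmul a)' ∘ T` are `σ(A,Ap)`-to-weak continuous. -/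
def SWC {A : Type*} [NormedRing A] [NormedAlgebra ℂ A]
    (Ap : Submodule ℂ (StrongDual ℂ A)) : Set (A →L[ℂ] StrongDual ℂ A) :=
  {T | @Continuous A (WeakSpace ℂ (A →L[ℂ] StrongDual ℂ A)) (weakTop Ap) _
        (fun a => toWeak (T.comp (rmul a))) ∧
      @Continuous A (WeakSpace ℂ (A →L[ℂ] StrongDual ℂ A)) (weakTop Ap) _
        (fun a => toWeak ((adjOp (lmul a)).comp T))}


/-- The adjoint `Δ'_A` of the multiplication map, sending `μ ∈ A'` to the operator
`b ↦ (a ↦ μ (a b))` in `B(A,A') = (A ⊗̂ A)'`. -/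
def DeltaAdj {A : Type*} [NormedRing A] [NormedAlgebra ℂ A] (μ : StrongDual ℂ A) :
    A →L[ℂ] StrongDual ℂ A :=
  (ContinuousLinearMap.compL ℂ A A ℂ μ).comp ((ContinuousLinearMap.mul ℂ A).flip)

/-!
`P(T)` is `M` composed with the orbit map `a ↦ a·T`, which is `σ(A, A_*)`-to-weak continuous;
so `P(T)` is a `σ(A, A_*)`-continuous functional, and a functional continuous for the topology
induced by a family of functionals lies in their span, here in `A_*`.
The two identities come from moving multiplication across `M` with `a·M = M·a`: for
`P ∘ Δ'_A = id`, `Δ'_A(μ)·a` becomes `a·Δ'_A(μ) = Δ'_A(μ·a)`, which `M` sends to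
`⟨μ, a Δ̃_A(M)⟩ = ⟨μ, a⟩`.
-/

lemma mem_of_continuous_weakTop {E : Type*} [NormedAddCommGroup E] [NormedSpace ℂ E]
    (p : Submodule ℂ (StrongDual ℂ E)) (g : StrongDual ℂ E)
    (hg : @Continuous E ℂ (weakTop p) _ g) : g ∈ p := by
  have hspan : (g : E →ₗ[ℂ] ℂ) ∈
      Submodule.span ℂ (Set.range fun φ : p => ((φ : StrongDual ℂ E) : E →ₗ[ℂ] ℂ)) :=
    (LinearMap.mem_span_iff_continuous _).2 hg
  have hrange : (Set.range fun φ : p => ((φ : StrongDual ℂ E) : E →ₗ[ℂ] ℂ)) =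
      ContinuousLinearMap.coeLM ℂ '' (p : Set (StrongDual ℂ E)) := by
    ext; simp [eq_comm]
  rw [hrange, Submodule.span_image, Submodule.span_eq] at hspan
  obtain ⟨h, hh, hhg⟩ := hspan
  rwa [← ContinuousLinearMap.coe_injective hhg]

section DualBanachAlgebra

variable {A : Type*} [NormedRing A] [NormedAlgebra ℂ A]

lemma comp_rmul_comp_rmul (T : A →L[ℂ] StrongDual ℂ A) (a b : A) :
    (T.comp (rmul a)).comp (rmul b) = T.comp (rmul (b * a)) := by
  ext c
  simp [rmul, mul_assoc]

lemma adjOp_lmul_comp_deltaAdj (μ : StrongDual ℂ A) (a : A) :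
    (adjOp (lmul a)).comp (DeltaAdj μ) = DeltaAdj (μ.comp (lmul a)) := by
  ext b c
  simp [adjOp, lmul, DeltaAdj, mul_assoc]

/-- The map `P`, `⟨P(T), a⟩ = ⟨M, a·T⟩`. -/
def diagonalProj (M : StrongDual ℂ (A →L[ℂ] StrongDual ℂ A)) (T : A →L[ℂ] StrongDual ℂ A) :
    StrongDual ℂ A :=
  M.comp ((ContinuousLinearMap.compL ℂ A A (StrongDual ℂ A) T).comp
    (ContinuousLinearMap.mul ℂ A).flip)

lemma diagonalProj_apply (M : StrongDual ℂ (A →L[ℂ] StrongDual ℂ A))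
    (T : A →L[ℂ] StrongDual ℂ A) (a : A) : diagonalProj M T a = M (T.comp (rmul a)) :=
  rfl

lemma diagonalProj_mem {Ap : Submodule ℂ (StrongDual ℂ A)}
    (M : StrongDual ℂ (A →L[ℂ] StrongDual ℂ A)) {T : A →L[ℂ] StrongDual ℂ A}
    (hT : T ∈ SWC Ap) : diagonalProj M T ∈ Ap := by
  refine mem_of_continuous_weakTop Ap _ ?_
  exact @Continuous.comp A (WeakSpace ℂ (A →L[ℂ] StrongDual ℂ A)) ℂ (weakTop Ap) _ _ _ _
    (WeakBilin.eval_continuous (topDualPairing ℂ (A →L[ℂ] StrongDual ℂ A)).flip M) hT.1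

lemma diagonalProj_deltaAdj {Ap : Submodule ℂ (StrongDual ℂ A)}
    (hlmul : ∀ μ ∈ Ap, ∀ a : A, μ.comp (lmul a) ∈ Ap)
    (hDelta : ∀ μ ∈ Ap, DeltaAdj μ ∈ SWC Ap)
    {M : StrongDual ℂ (A →L[ℂ] StrongDual ℂ A)}
    (hM : ∀ a : A, ∀ T ∈ SWC Ap, M (T.comp (rmul a)) = M ((adjOp (lmul a)).comp T))
    {x : A} (hx : ∀ μ ∈ Ap, μ x = M (DeltaAdj μ)) (hxid : ∀ a : A, a * x = a)
    {μ : StrongDual ℂ A} (hμ : μ ∈ Ap) : diagonalProj M (DeltaAdj μ) = μ := by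
  ext a
  rw [diagonalProj_apply, hM a _ (hDelta μ hμ), adjOp_lmul_comp_deltaAdj,
    ← hx _ (hlmul μ hμ a)]
  simp [lmul, hxid a]

lemma diagonalProj_bimodule {Ap : Submodule ℂ (StrongDual ℂ A)}
    (hrmul : ∀ T ∈ SWC Ap, ∀ a : A, T.comp (rmul a) ∈ SWC Ap)
    {M : StrongDual ℂ (A →L[ℂ] StrongDual ℂ A)}
    (hM : ∀ a : A, ∀ T ∈ SWC Ap, M (T.comp (rmul a)) = M ((adjOp (lmul a)).comp T))
    (a b : A) {T : A →L[ℂ] StrongDual ℂ A} (hT : T ∈ SWC Ap) :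
    diagonalProj M ((adjOp (lmul b)).comp (T.comp (rmul a)))
      = ((diagonalProj M T).comp (lmul b)).comp (rmul a) := by
  ext c
  simp only [diagonalProj_apply, ContinuousLinearMap.comp_apply]
  rw [ContinuousLinearMap.comp_assoc, comp_rmul_comp_rmul, ← hM b _ (hrmul T hT _),
    comp_rmul_comp_rmul]
  rfl

end DualBanachAlgebra

theorem stmt15_general {A : Type*} [NormedRing A] [NormedAlgebra ℂ A]
    (Ap : Submodule ℂ (StrongDual ℂ A))
    (hsub : ∀ μ ∈ Ap, ∀ a : A, μ.comp (lmul a) ∈ Ap ∧ μ.comp (rmul a) ∈ Ap)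
    (hmod : ∀ T ∈ SWC Ap, ∀ a : A,
      T.comp (rmul a) ∈ SWC Ap ∧ (adjOp (lmul a)).comp T ∈ SWC Ap)
    (hDelta : ∀ μ ∈ Ap, DeltaAdj μ ∈ SWC Ap)
    (M : StrongDual ℂ (A →L[ℂ] StrongDual ℂ A))
    (hM1 : ∀ a : A, ∀ T ∈ SWC Ap, M (T.comp (rmul a)) = M ((adjOp (lmul a)).comp T))
    (x : A) (hx : ∀ μ ∈ Ap, μ x = M (DeltaAdj μ)) (hxid : ∀ a : A, a * x = a) :
    (∀ T ∈ SWC Ap, ∃ μ ∈ Ap, ∀ a : A, μ a = M (T.comp (rmul a))) ∧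
    (∀ μ ∈ Ap, ∀ a : A, M ((DeltaAdj μ).comp (rmul a)) = μ a) ∧
    (∀ (a b c : A), ∀ T ∈ SWC Ap,
      M (((adjOp (lmul b)).comp (T.comp (rmul a))).comp (rmul c))
        = M (T.comp (rmul (b * c * a)))) := by
  refine ⟨fun T hT => ⟨diagonalProj M T, diagonalProj_mem M hT, diagonalProj_apply M T⟩,
    fun μ hμ a => ?_, fun a b c T hT => ?_⟩
  · have hlmul μ hμ a := (hsub μ hμ a).1
    exact DFunLike.congr_fun (diagonalProj_deltaAdj hlmul hDelta hM1 hx hxid hμ) a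
  · have hrmul T hT a := (hmod T hT a).1
    have := DFunLike.congr_fun (diagonalProj_bimodule hrmul hM1 a b hT) c
    simpa [diagonalProj_apply, lmul, rmul, mul_assoc] using this

/-- Let `A` be a dual Banach algebra with predual `Ap` and let `M` be a `σWC`-virtual
diagonal (represented by a functional on `(A ⊗̂ A)' = B(A,A')`; `hM1` says `a·M = M·a` on
`σWC`, and `x = Δ̃_A(M)` satisfies `a x = a`).  Then `P : σWC(B(A,A')) → A'`,
`⟨P(T), a⟩ = ⟨M, a·T⟩`, takes values in `Ap`, satisfies `P ∘ Δ'_A = id` on `Ap`, and is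
an `A`-bimodule homomorphism: `⟨P(a·T·b), c⟩ = ⟨a·P(T)·b, c⟩ = ⟨P(T), b c a⟩`. -/
theorem stmt15 {A : Type*} [NormedRing A] [NormedAlgebra ℂ A] [CompleteSpace A]
    (Ap : Submodule ℂ (StrongDual ℂ A)) (hc : IsClosed (Ap : Set (StrongDual ℂ A)))
    (hsub : ∀ μ ∈ Ap, ∀ a : A, μ.comp (lmul a) ∈ Ap ∧ μ.comp (rmul a) ∈ Ap)
    (hp : IsPredual Ap)
    (hmod : ∀ T ∈ SWC Ap, ∀ a : A,
      T.comp (rmul a) ∈ SWC Ap ∧ (adjOp (lmul a)).comp T ∈ SWC Ap)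
    (hDelta : ∀ μ ∈ Ap, DeltaAdj μ ∈ SWC Ap)
    (M : StrongDual ℂ (A →L[ℂ] StrongDual ℂ A))
    (hM1 : ∀ a : A, ∀ T ∈ SWC Ap, M (T.comp (rmul a)) = M ((adjOp (lmul a)).comp T))
    (x : A) (hx : ∀ μ ∈ Ap, μ x = M (DeltaAdj μ)) (hxid : ∀ a : A, a * x = a) :
    (∀ T ∈ SWC Ap, ∃ μ ∈ Ap, ∀ a : A, μ a = M (T.comp (rmul a))) ∧
    (∀ μ ∈ Ap, ∀ a : A, M ((DeltaAdj μ).comp (rmul a)) = μ a) ∧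
    (∀ (a b c : A), ∀ T ∈ SWC Ap,
      M (((adjOp (lmul b)).comp (T.comp (rmul a))).comp (rmul c))
        = M (T.comp (rmul (b * c * a)))) :=
  stmt15_general Ap hsub hmod hDelta M hM1 x hx hxid
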